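/- Let d₀, a, b > 0 satisfy |a - b| < d₀ < a + b. Then the area of the intersection of two disks of radii a and b in ℝ² whose centers are distance d₀ apart equals b²·arccos((d₀² + b² − a²)/(2 d₀ b)) + a²·arccos((d₀² + a² − b²)/(2 d₀ a)) − (1/2)·√(4 d₀² a² − (d₀² − b² + a²)²). -/

import Mathlib

/-!
Move the centres to `(0, 0)` and `(d₀, 0)` by an isometry of the plane. Since
`(a² - x²) - (b² - (d₀ - x)²) = 2 d₀ (x₀ - x)` with `2 d₀ x₀ = d₀² + a² - b²`, the line `x = x₀`
through the two intersection points cuts the lens into a segment of the disk of radius `b` (for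
`x ≤ x₀`) and one of the disk of radius `a` (for `x ≥ x₀`). By Cavalieri, each segment has area
`∫ 2 √(r² - x²)`, which integrates to `r² arccos (c / r) - c √(r² - c²)` for a chord at distance
`c` from the centre; with `c = d₀ - x₀` and `c = x₀` the two `c √(r² - c²)` terms add up to
`d₀ h`, where `h = √(a² - x₀²)` is half the length of the common chord.
-/

open MeasureTheory Real Set Metric

/-- The area of the part of a disk of radius `r` beyond a chord at signed distance `c` from the
centre. -/
noncomputable def circularSegmentArea (r c : ℝ) : ℝ :=
  r ^ 2 * arccos (c / r) - c * √(r ^ 2 - c ^ 2)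

theorem hasDerivAt_mul_sqrt_sq_sub_sq_sub_arccos {r x : ℝ} (hr : 0 < r) (hx : x ∈ Ioo (-r) r) :
    HasDerivAt (fun x => x * √(r ^ 2 - x ^ 2) - r ^ 2 * arccos (x / r))
      (2 * √(r ^ 2 - x ^ 2)) x := by
  have hpos : 0 < r ^ 2 - x ^ 2 := by nlinarith [hx.1, hx.2]
  have hx₁ : x / r ≠ -1 := by
    rw [ne_eq, div_eq_iff hr.ne']; linarith [hx.1]
  have hx₂ : x / r ≠ 1 := by
    rw [ne_eq, div_eq_iff hr.ne']; linarith [hx.2]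
  have hsqrt : HasDerivAt (fun x => √(r ^ 2 - x ^ 2)) (-(2 * x) / (2 * √(r ^ 2 - x ^ 2))) x := by
    simpa using ((hasDerivAt_pow 2 x).const_sub (r ^ 2)).sqrt hpos.ne'
  have harccos := ((hasDerivAt_arccos hx₁ hx₂).comp x ((hasDerivAt_id x).div_const r)).const_mul
    (r ^ 2)
  refine (((hasDerivAt_id x).mul hsqrt).sub harccos).congr_deriv ?_
  have hs : √(1 - (x / r) ^ 2) = √(r ^ 2 - x ^ 2) / r := by
    rw [← sqrt_sq hr.le, ← sqrt_div' _ (sq_nonneg r), sqrt_sq hr.le]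
    congr 1; field_simp
  have hsq := mul_self_sqrt hpos.le
  rw [hs, id]
  field_simp
  linear_combination -hsq

theorem integral_two_mul_sqrt_sq_sub_sq {r c : ℝ} (hr : 0 < r) (hc : -r ≤ c) (hcr : c ≤ r) :
    ∫ x in c..r, 2 * √(r ^ 2 - x ^ 2) = circularSegmentArea r c := by
  rw [intervalIntegral.integral_eq_sub_of_hasDerivAt_of_le hcr (by fun_prop)
    (fun x hx => hasDerivAt_mul_sqrt_sq_sub_sq_sub_arccos hr ⟨hc.trans_lt hx.1, hx.2⟩)
    ((by fun_prop : Continuous fun x : ℝ => 2 * √(r ^ 2 - x ^ 2)).intervalIntegrable _ _)]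
  simp [circularSegmentArea, div_self hr.ne']

theorem volume_setOf_sq_le (c : ℝ) : volume {y : ℝ | y ^ 2 ≤ c} = ENNReal.ofReal (2 * √c) := by
  rcases le_or_gt 0 c with hc | hc
  · have : {y : ℝ | y ^ 2 ≤ c} = Icc (-√c) √c := by
      ext y; exact sq_le hc
    rw [this, volume_Icc]
    ring_nf
  · have : {y : ℝ | y ^ 2 ≤ c} = ∅ := by
      ext y; simpa using hc.trans_le (sq_nonneg y)
    simp [this, sqrt_eq_zero'.mpr hc.le]

theorem volume_setOf_snd_sq_le {t : ℝ → ℝ} (ht : Measurable t) :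
    volume {z : ℝ × ℝ | z.2 ^ 2 ≤ t z.1} = ∫⁻ x, ENNReal.ofReal (2 * √(t x)) := by
  rw [Measure.volume_eq_prod, Measure.prod_apply (measurableSet_le (by fun_prop) (by fun_prop))]
  exact lintegral_congr fun x => volume_setOf_sq_le (t x)

theorem lintegral_ofReal_eq_intervalIntegral {g : ℝ → ℝ} {c e : ℝ} (hce : c ≤ e)
    (hg : ContinuousOn g (Icc c e)) (hg₀ : 0 ≤ g) (hsupp : Function.support g ⊆ Icc c e) :
    ∫⁻ x, ENNReal.ofReal (g x) = ENNReal.ofReal (∫ x in c..e, g x) := by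
  rw [← setLIntegral_eq_of_support_subset (fun x hx => hsupp fun h => hx (by simp [h])),
    ← ofReal_integral_eq_lintegral_ofReal (hg.integrableOn_Icc) (.of_forall hg₀),
    intervalIntegral.integral_of_le hce, integral_Icc_eq_integral_Ioc]

theorem volume_lens_eq_circularSegmentArea_add {a b d x₀ : ℝ} (ha : 0 < a) (hb : 0 < b)
    (hd : 0 < d) (h₁ : |a - b| ≤ d) (h₂ : d ≤ a + b) (hx₀ : 2 * d * x₀ = d ^ 2 + a ^ 2 - b ^ 2) :
    volume {z : ℝ × ℝ | z.1 ^ 2 + z.2 ^ 2 ≤ a ^ 2 ∧ (z.1 - d) ^ 2 + z.2 ^ 2 ≤ b ^ 2} =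
      ENNReal.ofReal (circularSegmentArea b (d - x₀) + circularSegmentArea a x₀) := by
  obtain ⟨hab, hba⟩ := abs_le.mp h₁
  have hx₀a : x₀ ≤ a := by nlinarith
  have hx₀b : d - b ≤ x₀ := by nlinarith
  set t : ℝ → ℝ := fun x => min (a ^ 2 - x ^ 2) (b ^ 2 - (d - x) ^ 2) with ht
  have hlens : {z : ℝ × ℝ | z.1 ^ 2 + z.2 ^ 2 ≤ a ^ 2 ∧ (z.1 - d) ^ 2 + z.2 ^ 2 ≤ b ^ 2} =
      {z : ℝ × ℝ | z.2 ^ 2 ≤ t z.1} := by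
    ext ⟨x, y⟩
    simp only [mem_ofPred_eq, ht, le_min_iff, sub_sq_comm x d]
    constructor <;> rintro ⟨h, h'⟩ <;> constructor <;> linarith
  have hsupp : Function.support (fun x => 2 * √(t x)) ⊆ Icc (d - b) a := by
    intro x hx
    have htx : 0 < t x := by
      by_contra! h
      exact hx (by simp [sqrt_eq_zero'.mpr h])
    obtain ⟨hxa, hxb⟩ := lt_min_iff.mp htx
    constructor <;> nlinarith
  have hcont : Continuous fun x => 2 * √(t x) := by fun_prop
  rw [hlens, volume_setOf_snd_sq_le (by fun_prop),
    lintegral_ofReal_eq_intervalIntegral (by linarith) hcont.continuousOn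
      (fun x => by positivity) hsupp,
    ← intervalIntegral.integral_add_adjacent_intervals (hcont.intervalIntegrable _ x₀)
      (hcont.intervalIntegrable x₀ _)]
  have hleft :
      ∫ x in (d - b)..x₀, 2 * √(t x) = ∫ x in (d - b)..x₀, 2 * √(b ^ 2 - (d - x) ^ 2) := by
    refine intervalIntegral.integral_congr fun x hx => ?_
    rw [uIcc_of_le hx₀b] at hx
    simp only [ht, min_eq_right (by nlinarith [hx.2] : b ^ 2 - (d - x) ^ 2 ≤ a ^ 2 - x ^ 2)]
  have hright : ∫ x in x₀..a, 2 * √(t x) = ∫ x in x₀..a, 2 * √(a ^ 2 - x ^ 2) := by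
    refine intervalIntegral.integral_congr fun x hx => ?_
    rw [uIcc_of_le hx₀a] at hx
    simp only [ht, min_eq_left (by nlinarith [hx.1] : a ^ 2 - x ^ 2 ≤ b ^ 2 - (d - x) ^ 2)]
  rw [hleft, hright, intervalIntegral.integral_comp_sub_left (fun y => 2 * √(b ^ 2 - y ^ 2)),
    sub_sub_cancel, integral_two_mul_sqrt_sq_sub_sq hb (by linarith) (by linarith),
    integral_two_mul_sqrt_sq_sub_sq ha (by nlinarith) hx₀a]

theorem circularSegmentArea_add_circularSegmentArea {a b d x₀ : ℝ} (hd : 0 < d)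
    (hx₀ : 2 * d * x₀ = d ^ 2 + a ^ 2 - b ^ 2) :
    circularSegmentArea b (d - x₀) + circularSegmentArea a x₀ =
      b ^ 2 * arccos ((d ^ 2 + b ^ 2 - a ^ 2) / (2 * d * b)) +
        a ^ 2 * arccos ((d ^ 2 + a ^ 2 - b ^ 2) / (2 * d * a)) -
        1 / 2 * √(4 * d ^ 2 * a ^ 2 - (d ^ 2 - b ^ 2 + a ^ 2) ^ 2) := by
  have hargb : (d - x₀) / b = (d ^ 2 + b ^ 2 - a ^ 2) / (2 * d * b) := by
    rw [← div_div]
    congr 1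
    rw [eq_div_iff (by positivity)]
    linear_combination -hx₀
  have harga : x₀ / a = (d ^ 2 + a ^ 2 - b ^ 2) / (2 * d * a) := by
    rw [← div_div]
    congr 1
    rw [eq_div_iff (by positivity)]
    linear_combination hx₀
  have hchord : b ^ 2 - (d - x₀) ^ 2 = a ^ 2 - x₀ ^ 2 := by linear_combination hx₀
  have hsqrt :
      √(4 * d ^ 2 * a ^ 2 - (d ^ 2 - b ^ 2 + a ^ 2) ^ 2) = 2 * d * √(a ^ 2 - x₀ ^ 2) := by
    rw [show 4 * d ^ 2 * a ^ 2 - (d ^ 2 - b ^ 2 + a ^ 2) ^ 2 = (2 * d) ^ 2 * (a ^ 2 - x₀ ^ 2) by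
      linear_combination (2 * d * x₀ + (d ^ 2 - b ^ 2 + a ^ 2)) * hx₀,
      sqrt_mul (sq_nonneg _), sqrt_sq (by positivity)]
  rw [circularSegmentArea, circularSegmentArea, hargb, harga, hchord, hsqrt]
  ring

theorem volume_closedBall_inter_closedBall_eq_of_dist_eq {E : Type*} [NormedAddCommGroup E]
    [InnerProductSpace ℝ E] [FiniteDimensional ℝ E] [MeasurableSpace E] [BorelSpace E]
    {p q p' q' : E} (h : dist p q = dist p' q') (a b : ℝ) :
    volume (closedBall p a ∩ closedBall q b) = volume (closedBall p' a ∩ closedBall q' b) := by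
  let ρ : E ≃ₗᵢ[ℝ] E := (ℝ ∙ (q - p - (q' - p')))ᗮ.reflection
  have hρ : ρ (q - p) = q' - p' :=
    Submodule.reflection_sub (by rwa [← dist_eq_norm', ← dist_eq_norm'])
  have hf : MeasurePreserving (fun x => ρ (x - p) + p') volume volume :=
    (measurePreserving_add_right volume p').comp
      (ρ.measurePreserving.comp (measurePreserving_sub_right volume p))
  have hpre : closedBall p a ∩ closedBall q b =
      (fun x => ρ (x - p) + p') ⁻¹' (closedBall p' a ∩ closedBall q' b) := by
    ext x
    have hq : ρ (x - p) + p' - q' = ρ (x - q) :=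
      calc ρ (x - p) + p' - q' = ρ (x - p) - ρ (q - p) := by rw [hρ]; abel
        _ = ρ (x - q) := by rw [← map_sub, sub_sub_sub_cancel_right]
    simp only [mem_inter_iff, mem_preimage, mem_closedBall, dist_eq_norm, add_sub_cancel_right,
      hq, LinearIsometryEquiv.norm_map]
  rw [hpre, hf.measure_preimage
    (isClosed_closedBall.inter isClosed_closedBall).measurableSet.nullMeasurableSet]

theorem EuclideanSpace.volume_preserving_fst_snd :
    MeasurePreserving (fun x : EuclideanSpace ℝ (Fin 2) => (x 0, x 1)) volume volume :=
  (volume_preserving_finTwoArrow ℝ).comp (PiLp.volume_preserving_ofLp (Fin 2))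

theorem EuclideanSpace.closedBall_zero_inter_closedBall_eq_preimage {a b : ℝ} (ha : 0 ≤ a)
    (hb : 0 ≤ b) (d : ℝ) :
    closedBall (0 : EuclideanSpace ℝ (Fin 2)) a ∩ closedBall !₂[d, 0] b =
      (fun x => (x 0, x 1)) ⁻¹'
        {z : ℝ × ℝ | z.1 ^ 2 + z.2 ^ 2 ≤ a ^ 2 ∧ (z.1 - d) ^ 2 + z.2 ^ 2 ≤ b ^ 2} := by
  ext x
  simp [← pow_le_pow_iff_left₀ (norm_nonneg _) ha two_ne_zero, EuclideanSpace.real_norm_sq_eq,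
    ← pow_le_pow_iff_left₀ dist_nonneg hb two_ne_zero, EuclideanSpace.dist_sq_eq, Real.dist_eq]

theorem EuclideanSpace.dist_zero_vec_of_nonneg {d : ℝ} (hd : 0 ≤ d) :
    dist (0 : EuclideanSpace ℝ (Fin 2)) !₂[d, 0] = d := by
  simp [EuclideanSpace.dist_eq, hd]

theorem lens_area_formula (p q : EuclideanSpace ℝ (Fin 2)) (d₀ a b : ℝ)
    (ha : 0 < a) (hb : 0 < b) (hd₀ : 0 < d₀) (hdist : dist p q = d₀)
    (h1 : |a - b| < d₀) (h2 : d₀ < a + b) :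
    volume (Metric.closedBall p a ∩ Metric.closedBall q b) =
      ENNReal.ofReal (b ^ 2 * Real.arccos ((d₀ ^ 2 + b ^ 2 - a ^ 2) / (2 * d₀ * b)) +
        a ^ 2 * Real.arccos ((d₀ ^ 2 + a ^ 2 - b ^ 2) / (2 * d₀ * a)) -
        (1 / 2) * Real.sqrt (4 * d₀ ^ 2 * a ^ 2 - (d₀ ^ 2 - b ^ 2 + a ^ 2) ^ 2)) := by
  have hx₀ : 2 * d₀ * ((d₀ ^ 2 + a ^ 2 - b ^ 2) / (2 * d₀)) = d₀ ^ 2 + a ^ 2 - b ^ 2 := by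
    field_simp
  have hlens : MeasurableSet
      {z : ℝ × ℝ | z.1 ^ 2 + z.2 ^ 2 ≤ a ^ 2 ∧ (z.1 - d₀) ^ 2 + z.2 ^ 2 ≤ b ^ 2} := by
    measurability
  rw [volume_closedBall_inter_closedBall_eq_of_dist_eq
      (hdist.trans (EuclideanSpace.dist_zero_vec_of_nonneg hd₀.le).symm),
    EuclideanSpace.closedBall_zero_inter_closedBall_eq_preimage ha.le hb.le,
    EuclideanSpace.volume_preserving_fst_snd.measure_preimage hlens.nullMeasurableSet,
    volume_lens_eq_circularSegmentArea_add ha hb hd₀ h1.le h2.le hx₀,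
    circularSegmentArea_add_circularSegmentArea hd₀ hx₀]
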